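/- Let G be a group and let N : ℕ → Subgroup G be a sequence of normal subgroups of G with N₁ ⊇ N₂ ⊇ … (i.e., N is antitone) and ⋂ᵢ Nᵢ = {1}. Let φ be a universal sentence in the language of groups such that φ holds in the quotient group G/Nᵢ for every i ∈ ℕ. Then φ holds in G. -/

import Mathlib

/-!
Quotient maps are homomorphisms of `grpLang`-structures, so at the image of a tuple of `G` a
quantifier-free formula is a boolean combination of the same finitely many equalities
`t₁ = t₂`, now read in `G ⧸ Nᵢ`. An equality that fails in `G` fails in `G ⧸ Nᵢ` for all large
`i`, because the chain descends to the trivial subgroup. So the formula has the same truth value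
at the tuple in `G` and in `G ⧸ Nᵢ` for large `i`, and a counterexample in `G` to a universal
sentence gives one in some quotient.
-/

open FirstOrder

/-- The first-order language of groups: one binary function symbol (multiplication),
one unary function symbol (inversion), and one constant symbol (identity). -/
def grpLang : FirstOrder.Language where
  Functions := fun n =>
    match n with
    | 0 => Unit
    | 1 => Unit
    | 2 => Unit
    | _ + 3 => Empty
  Relations := fun _ => Empty

/-- Every group is naturally a structure for the language of groups. -/
instance grpStructure (G : Type*) [Group G] : grpLang.Structure G where
  funMap := fun {n} f x =>
    match n, f, x with
    | 0, _, _ => (1 : G)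
    | 1, _, x => (x 0)⁻¹
    | 2, _, x => x 0 * x 1
    | _ + 3, f, _ => f.elim
  RelMap := fun {_} r _ => r.elim

/-- A universal sentence is one of the form `∀ x₁ … ∀ xₖ, Φ` with `Φ` quantifier-free. -/
def IsUniversalSentence (φ : grpLang.Sentence) : Prop :=
  ∃ (k : ℕ) (ψ : grpLang.BoundedFormula Empty k), ψ.IsQF ∧ φ = ψ.alls

open Language Filter

instance (n : ℕ) : IsEmpty (grpLang.Relations n) := inferInstanceAs (IsEmpty Empty)

def MonoidHom.toGrpLangHom {G H : Type*} [Group G] [Group H] (f : G →* H) :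
    G →[grpLang] H where
  toFun := f
  map_fun' {n} F x :=
    match n, F with
    | 0, _ => map_one f
    | 1, _ => map_inv f (x 0)
    | 2, _ => map_mul f (x 0) (x 1)
  map_rel' r := isEmptyElim r

namespace FirstOrder.Language.BoundedFormula

variable {L : Language} [L.IsAlgebraic] {M : Type*} [L.Structure M] {ι : Type*} {l : Filter ι}
  {P : ι → Type*} [∀ i, L.Structure (P i)]

theorem IsQF.eventually_realize_comp_iff (f : ∀ i, M →[L] P i)
    (hsep : ∀ a b : M, a ≠ b → ∀ᶠ i in l, f i a ≠ f i b)
    {α : Type*} {n : ℕ} {ψ : L.BoundedFormula α n} (hψ : ψ.IsQF) (v : α → M)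
    (xs : Fin n → M) : ∀ᶠ i in l, (ψ.Realize (f i ∘ v) (f i ∘ xs) ↔ ψ.Realize v xs) := by
  induction hψ with
  | falsum => exact Eventually.of_forall fun _ => Iff.rfl
  | of_isAtomic hatom =>
    cases hatom with
    | equal t₁ t₂ =>
      simp only [realize_bdEqual, ← Sum.comp_elim, HomClass.realize_term]
      by_cases hab : t₁.realize (Sum.elim v xs) = t₂.realize (Sum.elim v xs)
      · exact Eventually.of_forall fun i => iff_of_true (congrArg (f i) hab) hab
      · exact (hsep _ _ hab).mono fun i hi => iff_of_false hi hab
    | rel R _ => exact isEmptyElim R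
  | imp _ _ ih₁ ih₂ =>
    exact (ih₁.and ih₂).mono fun i ⟨h₁, h₂⟩ => by simp only [realize_imp, h₁, h₂]

theorem IsQF.realize_alls_of_frequently (f : ∀ i, M →[L] P i)
    (hsep : ∀ a b : M, a ≠ b → ∀ᶠ i in l, f i a ≠ f i b)
    {k : ℕ} {ψ : L.BoundedFormula Empty k} (hψ : ψ.IsQF)
    (h : ∃ᶠ i in l, P i ⊨ ψ.alls) : M ⊨ ψ.alls := by
  simp only [Sentence.Realize, realize_alls] at h ⊢
  intro xs
  have hiff := hψ.eventually_realize_comp_iff f hsep default xs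
  obtain ⟨i, hi, hiff⟩ := (h.and_eventually hiff).exists
  rw [← hiff, Unique.eq_default (f i ∘ default)]
  exact hi _

end FirstOrder.Language.BoundedFormula

theorem QuotientGroup.eventually_mk_ne_of_antitone {G : Type*} [Group G] {ι : Type*}
    [Preorder ι] {N : ι → Subgroup G} [∀ i, (N i).Normal] (hanti : Antitone N)
    (hinf : ⨅ i, N i = ⊥) {a b : G} (hab : a ≠ b) :
    ∀ᶠ i in atTop, (a : G ⧸ N i) ≠ b := by
  have hne : a⁻¹ * b ∉ ⨅ i, N i := by
    rw [hinf, Subgroup.mem_bot, inv_mul_eq_one]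
    exact hab
  obtain ⟨i₀, hi₀⟩ : ∃ i₀, a⁻¹ * b ∉ N i₀ := by simpa [Subgroup.mem_iInf] using hne
  filter_upwards [eventually_ge_atTop i₀] with i hi
  rw [Ne, QuotientGroup.eq]
  exact fun hmem => hi₀ (hanti hi hmem)

/-- If `N₁ ⊇ N₂ ⊇ …` is a descending chain of normal subgroups of `G` with trivial
intersection and a universal sentence `φ` holds in every quotient `G / Nᵢ`, then `φ`
holds in `G`. -/
theorem universal_sentence_of_residual_chain (G : Type) [Group G]
    (N : ℕ → Subgroup G) (hnormal : ∀ i, (N i).Normal) (hanti : Antitone N)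
    (hinf : ⨅ i, N i = ⊥)
    (φ : grpLang.Sentence) (huniv : IsUniversalSentence φ)
    (h : ∀ i, haveI := hnormal i; (G ⧸ N i) ⊨ φ) :
    G ⊨ φ := by
  obtain ⟨k, ψ, hψ, rfl⟩ := huniv
  have := hnormal
  exact hψ.realize_alls_of_frequently (fun i => (QuotientGroup.mk' (N i)).toGrpLangHom)
    (fun _ _ hab => QuotientGroup.eventually_mk_ne_of_antitone hanti hinf hab)
    (Frequently.of_forall h)
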